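/- arXiv:0811.1331 — 4 statements merged into one kernel-verified Lean document; each statement's English description precedes it below -/
import Mathlib

section
/- Let n ≥ 2 and let a ∈ A¹ = E¹ be nonzero. Then H¹(A, δ_a) is isomorphic as a k-vector space to the kernel of the map ψ_a : I² → E³ given by ψ_a(x) = a·x, where I² = I ∩ E² is the degree-two part of I. In particular, a nonzero element a ∈ A¹ lies in the first resonance variety R¹ if and only if ψ_a fails to be injective. -/
noncomputable section

open ExteriorAlgebra

/-- Index set for the generators `e_{p,q}`, `p ≠ q`, of the exterior algebra `E`. -/
abbrev RIdx (n : ℕ) := {pq : Fin n × Fin n // pq.1 ≠ pq.2}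

/-- The exterior algebra `E` on the vector space with basis `{e_{p,q} : p ≠ q}`. -/
abbrev Egen (k : Type) [Field k] (n : ℕ) := ExteriorAlgebra k (RIdx n →₀ k)

/-- The degree-one generator `e_{p,q}` of `E`. -/
def egen (k : Type) [Field k] {n : ℕ} (p q : Fin n) (h : p ≠ q) : Egen k n :=
  ExteriorAlgebra.ι k (Finsupp.single (⟨(p, q), h⟩ : RIdx n) (1 : k))

/-- The degree-one generator `e_{p,q}` indexed by an element of `RIdx n`. -/
def egen' (k : Type) [Field k] {n : ℕ} (x : RIdx n) : Egen k n :=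
  ExteriorAlgebra.ι k (Finsupp.single x (1 : k))

/-- The generators `η_{i,j} = e_{i,j} e_{j,i}` (for `i < j`) and
`τ^m_{i,j} = (e_{m,i} - e_{j,i})(e_{m,j} - e_{i,j})` (for `i < j`, `m ∉ {i,j}`)
of the ideal `I`. -/
def resGens (k : Type) [Field k] (n : ℕ) : Set (Egen k n) :=
  {x | ∃ (i j : Fin n) (hij : i < j),
      x = egen k i j hij.ne * egen k j i hij.ne'} ∪
  {x | ∃ (i j m : Fin n) (hij : i < j) (hmi : m ≠ i) (hmj : m ≠ j),
      x = (egen k m i hmi - egen k j i hij.ne') * (egen k m j hmj - egen k i j hij.ne)}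

/-- The two-sided ideal `I` of `E` generated by the `η`'s and `τ`'s. -/
def resIdeal (k : Type) [Field k] (n : ℕ) : TwoSidedIdeal (Egen k n) :=
  TwoSidedIdeal.span (resGens k n)

/-- The quotient algebra `A = E/I`, i.e. `H^*(PΣ_n; k)`. -/
abbrev resA (k : Type) [Field k] (n : ℕ) := (resIdeal k n).ringCon.Quotient

/-- The quotient map `π : E → A = E/I` as a `k`-algebra homomorphism. -/
def resπ (k : Type) [Field k] (n : ℕ) : Egen k n →ₐ[k] resA k n :=
  { (resIdeal k n).ringCon.mk' with commutes' := fun _ => rfl }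

/-- The degree-`m` graded piece `A^m` of `A = E/I`: the image of `E^m = ⋀^m` in `A`. -/
def resAmod (k : Type) [Field k] (n : ℕ) (m : ℕ) : Submodule k (resA k n) :=
  Submodule.map (resπ k n).toLinearMap (⋀[k]^m (RIdx n →₀ k))

/-- The first resonance variety `R¹ = {a ∈ A¹ : H¹(A, δ_a) ≠ 0}`:  `H¹(A,δ_a) ≠ 0` iff some
`x ∈ A¹ = ker(δ_a : A¹ → A²)`-element with `a·x = 0` is not in the image of `δ_a : A⁰ → A¹`. -/
def resR1 (k : Type) [Field k] (n : ℕ) : Set (resA k n) :=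
  {a | a ∈ resAmod k n 1 ∧
    ∃ x ∈ resAmod k n 1, a * x = 0 ∧
      x ∉ Submodule.map (LinearMap.mulLeft k a) (resAmod k n 0)}

/-- The subspace `C_{i,j} = span{e_{i,j}, e_{j,i}}` of `A¹`. -/
def resC2 (k : Type) [Field k] (n : ℕ) (i j : Fin n) (hij : i ≠ j) :
    Submodule k (resA k n) :=
  Submodule.span k {resπ k n (egen k i j hij), resπ k n (egen k j i hij.symm)}

/-- The subspace `C_{i,j,m} = span{e_{j,i} − e_{m,i}, e_{i,j} − e_{m,j}, e_{i,m} − e_{j,m}}`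
of `A¹`. -/
def resC3 (k : Type) [Field k] (n : ℕ) (i j m : Fin n)
    (hij : i ≠ j) (him : i ≠ m) (hjm : j ≠ m) : Submodule k (resA k n) :=
  Submodule.span k {resπ k n (egen k j i hij.symm - egen k m i him.symm),
                    resπ k n (egen k i j hij - egen k m j hjm.symm),
                    resπ k n (egen k i m him - egen k j m hjm)}

/-- The two-sided ideal `I`, viewed as a `k`-subspace of `E`. -/
def resIdealSub (k : Type) [Field k] (n : ℕ) : Submodule k (Egen k n) where
  carrier := resIdeal k n
  add_mem' := (resIdeal k n).add_mem
  zero_mem' := (resIdeal k n).zero_mem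
  smul_mem' c x hx := by
    have h := (resIdeal k n).mul_mem_left (algebraMap k (Egen k n) c) x hx
    simpa [Algebra.smul_def] using h

/-- The degree-two part `I² = I ∩ E²` of the ideal `I`, as a `k`-subspace of `E`. -/
def resI2 (k : Type) [Field k] (n : ℕ) : Submodule k (Egen k n) :=
  resIdealSub k n ⊓ ⋀[k]^2 (RIdx n →₀ k)

/-- The map `ψ_a : I² → E` (with image in `E³` when `a ∈ E¹`), `x ↦ a·x`. -/
def resPsi (k : Type) [Field k] (n : ℕ) (a : Egen k n) : resI2 k n →ₗ[k] Egen k n :=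
  (LinearMap.mulLeft k a).comp (resI2 k n).subtype

/-!
Put `K = {x ∈ E¹ : a x ∈ I}` (`resLiftedCocycles a`). Since `I` is generated in degree
two, `I ∩ E¹ = 0`, so `x ↦ [π x]` maps `K` onto `H¹(A, δ_a)` with kernel `k·a`. Writing
`a = ι v` with `v ≠ 0` and choosing `f` with `f v = 1`, contraction by `f` shows that `a y = 0`
forces `y = a (f ⌋ y)`; hence `x ↦ a x` maps `K` onto `ker ψ_a`, again with kernel `k·a`.
-/

namespace ExteriorAlgebra

section CommRing

variable {R M : Type*} [CommRing R] [AddCommGroup M] [Module R M]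

theorem mem_exteriorPower_one_iff {x : ExteriorAlgebra R M} :
    x ∈ ⋀[R]^1 M ↔ ∃ v, ι R v = x := by
  rw [exteriorPower, pow_one, LinearMap.mem_range]

theorem mem_exteriorPower_zero_iff {x : ExteriorAlgebra R M} :
    x ∈ ⋀[R]^0 M ↔ ∃ r, algebraMap R _ r = x := by
  rw [exteriorPower, pow_zero, Submodule.mem_one]

theorem mul_self_eq_zero_of_mem_exteriorPower_one {a : ExteriorAlgebra R M}
    (ha : a ∈ ⋀[R]^1 M) : a * a = 0 := by
  obtain ⟨v, rfl⟩ := mem_exteriorPower_one_iff.mp ha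
  exact ι_sq_zero v

theorem toTrivSqZeroExt_eq_zero_of_mem_exteriorPower_two [Module Rᵐᵒᵖ M] [IsCentralScalar R M]
    {y : ExteriorAlgebra R M} (hy : y ∈ ⋀[R]^2 M) : toTrivSqZeroExt y = 0 := by
  rw [exteriorPower, pow_two] at hy
  induction hy using Submodule.mul_induction_on' with
  | mem_mul_mem a ha b hb =>
    obtain ⟨u, rfl⟩ := ha
    obtain ⟨w, rfl⟩ := hb
    rw [map_mul, toTrivSqZeroExt_ι, toTrivSqZeroExt_ι, TrivSqZeroExt.inr_mul_inr]
  | add a _ b _ ha hb => rw [map_add, ha, hb, add_zero]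

/-- An ideal generated in degree two lies in the kernel of the projection onto `R ⊕ M`,
which is injective on `⋀¹`. -/
theorem eq_zero_of_mem_exteriorPower_one_of_mem_span {S : Set (ExteriorAlgebra R M)}
    (hS : S ⊆ ⋀[R]^2 M) {x : ExteriorAlgebra R M} (h1 : x ∈ ⋀[R]^1 M)
    (hx : x ∈ TwoSidedIdeal.span S) : x = 0 := by
  let _ : Module Rᵐᵒᵖ M := Module.compHom _ ((RingHom.id R).fromOpposite mul_comm)
  have : IsCentralScalar R M := ⟨fun _ _ => rfl⟩
  have hker : S ⊆ TwoSidedIdeal.ker (toTrivSqZeroExt (R := R) (M := M)) := fun y hy =>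
    (TwoSidedIdeal.mem_ker _).mpr (toTrivSqZeroExt_eq_zero_of_mem_exteriorPower_two (hS hy))
  obtain ⟨v, rfl⟩ := mem_exteriorPower_one_iff.mp h1
  have h0 := (TwoSidedIdeal.mem_ker _).mp (TwoSidedIdeal.span_le.mpr hker hx)
  rw [toTrivSqZeroExt_ι, ← TrivSqZeroExt.inr_zero] at h0
  rw [TrivSqZeroExt.inr_injective h0, map_zero]

end CommRing

section Field

variable {K V : Type*} [Field K] [AddCommGroup V] [Module K V]

theorem ι_mul_contractLeft_of_ι_mul_eq_zero {v : V} {f : Module.Dual K V} (hf : f v = 1)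
    {y : ExteriorAlgebra K V} (hy : ι K v * y = 0) :
    ι K v * CliffordAlgebra.contractLeft f y = y := by
  have h := CliffordAlgebra.contractLeft_ι_mul (Q := 0) f v y
  rw [hy, map_zero, hf, one_smul] at h
  exact (sub_eq_zero.mp h.symm).symm

theorem mem_span_singleton_of_mul_eq_zero {a x : ExteriorAlgebra K V} (ha1 : a ∈ ⋀[K]^1 V)
    (ha : a ≠ 0) (hx : x ∈ ⋀[K]^1 V) (h : a * x = 0) : x ∈ K ∙ a := by
  obtain ⟨v, rfl⟩ := mem_exteriorPower_one_iff.mp ha1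
  obtain ⟨w, rfl⟩ := mem_exteriorPower_one_iff.mp hx
  have hv : v ≠ 0 := by rintro rfl; exact ha (map_zero _)
  obtain ⟨f, hf⟩ := Module.Projective.exists_dual_eq_one K hv
  have h' := ι_mul_contractLeft_of_ι_mul_eq_zero hf h
  rw [CliffordAlgebra.contractLeft_ι, ← Algebra.commutes, ← Algebra.smul_def] at h'
  exact Submodule.mem_span_singleton.mpr ⟨f w, h'⟩

theorem exists_mul_eq_of_mul_eq_zero {a y : ExteriorAlgebra K V} (ha1 : a ∈ ⋀[K]^1 V)
    (ha : a ≠ 0) {p : ℕ} (hy : y ∈ ⋀[K]^(1 + p) V) (h : a * y = 0) :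
    ∃ x ∈ ⋀[K]^p V, a * x = y := by
  classical
  obtain ⟨v, rfl⟩ := mem_exteriorPower_one_iff.mp ha1
  have hv : v ≠ 0 := by rintro rfl; exact ha (map_zero _)
  obtain ⟨f, hf⟩ := Module.Projective.exists_dual_eq_one K hv
  refine ⟨_, (DirectSum.decompose (fun i : ℕ => ⋀[K]^i V)
    (CliffordAlgebra.contractLeft (Q := 0) f y) p).2, ?_⟩
  rw [← DirectSum.coe_decompose_mul_add_of_left_mem (fun i : ℕ => ⋀[K]^i V) ha1,
    ι_mul_contractLeft_of_ι_mul_eq_zero hf h,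
    DirectSum.decompose_of_mem_same (fun i : ℕ => ⋀[K]^i V) hy]

end Field

end ExteriorAlgebra

def LinearMap.equivOfSurjectiveOfKerEq {R V W U : Type*} [Ring R] [AddCommGroup V]
    [AddCommGroup W] [AddCommGroup U] [Module R V] [Module R W] [Module R U]
    {f : V →ₗ[R] W} {g : V →ₗ[R] U} (hf : Function.Surjective f)
    (hg : Function.Surjective g) (h : ker f = ker g) : W ≃ₗ[R] U :=
  (f.quotKerEquivOfSurjective hf).symm ≪≫ₗ Submodule.quotEquivOfEq _ _ h ≪≫ₗ
    g.quotKerEquivOfSurjective hg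

noncomputable section

variable {k : Type} [Field k] {n : ℕ}

theorem resπ_eq_zero_iff {x : Egen k n} : resπ k n x = 0 ↔ x ∈ resIdeal k n := by
  change (resIdeal k n).ringCon.mk' x = 0 ↔ _
  rw [← TwoSidedIdeal.mem_ker, TwoSidedIdeal.ker_ringCon_mk']

theorem resGens_subset_exteriorPower_two : resGens k n ⊆ ⋀[k]^2 (RIdx n →₀ k) := by
  have hgen (p q : Fin n) (h : p ≠ q) : egen k p q h ∈ ⋀[k]^1 (RIdx n →₀ k) :=
    mem_exteriorPower_one_iff.mpr ⟨_, rfl⟩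
  rintro x (⟨i, j, hij, rfl⟩ | ⟨i, j, m, hij, hmi, hmj, rfl⟩)
  · exact SetLike.mul_mem_graded (A := fun i : ℕ => ⋀[k]^i (RIdx n →₀ k))
      (hgen _ _ _) (hgen _ _ _)
  · exact SetLike.mul_mem_graded (A := fun i : ℕ => ⋀[k]^i (RIdx n →₀ k))
      (sub_mem (hgen _ _ _) (hgen _ _ _)) (sub_mem (hgen _ _ _) (hgen _ _ _))

theorem eq_zero_of_mem_exteriorPower_one_of_mem_resIdeal {x : Egen k n}
    (h1 : x ∈ ⋀[k]^1 (RIdx n →₀ k)) (hI : x ∈ resIdeal k n) : x = 0 :=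
  eq_zero_of_mem_exteriorPower_one_of_mem_span resGens_subset_exteriorPower_two h1 hI

abbrev resZ1 (α : resA k n) : Submodule k (resA k n) :=
  resAmod k n 1 ⊓ LinearMap.ker (LinearMap.mulLeft k α)

abbrev resB1 (α : resA k n) : Submodule k (resZ1 α) :=
  (Submodule.map (LinearMap.mulLeft k α) (resAmod k n 0)).comap (resZ1 α).subtype

abbrev resH1 (α : resA k n) := resZ1 α ⧸ resB1 α

theorem resπ_mem_resR1_iff {a : Egen k n} (ha1 : a ∈ ⋀[k]^1 (RIdx n →₀ k)) :
    resπ k n a ∈ resR1 k n ↔ Nontrivial (resH1 (resπ k n a)) := by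
  rw [Submodule.Quotient.nontrivial_iff, Ne, Submodule.eq_top_iff', not_forall]
  constructor
  · rintro ⟨-, x, hx1, hxa, hxB⟩
    exact ⟨⟨x, hx1, hxa⟩, hxB⟩
  · rintro ⟨⟨x, hx1, hxa⟩, hxB⟩
    exact ⟨⟨a, ha1, rfl⟩, x, hx1, hxa, hxB⟩

def resLiftedCocycles (a : Egen k n) : Submodule k (Egen k n) :=
  ⋀[k]^1 (RIdx n →₀ k) ⊓ (resIdealSub k n).comap (LinearMap.mulLeft k a)

variable {a : Egen k n}

def resLiftedToKerPsi (ha1 : a ∈ ⋀[k]^1 (RIdx n →₀ k)) :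
    resLiftedCocycles a →ₗ[k] LinearMap.ker (resPsi k n a) :=
  LinearMap.codRestrict _
    (LinearMap.codRestrict (resI2 k n)
      ((LinearMap.mulLeft k a).comp (resLiftedCocycles a).subtype)
      fun x => ⟨x.2.2,
        SetLike.mul_mem_graded (A := fun i : ℕ => ⋀[k]^i (RIdx n →₀ k)) ha1 x.2.1⟩)
    fun x => by
      change a * (a * x) = 0
      rw [← mul_assoc, mul_self_eq_zero_of_mem_exteriorPower_one ha1, zero_mul]

theorem resLiftedToKerPsi_surjective (ha1 : a ∈ ⋀[k]^1 (RIdx n →₀ k)) (ha : a ≠ 0) :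
    Function.Surjective (resLiftedToKerPsi ha1) := by
  rintro ⟨⟨y, hyI, hy2⟩, hy⟩
  obtain ⟨x, hx1, rfl⟩ := exists_mul_eq_of_mul_eq_zero (p := 1) ha1 ha hy2 hy
  exact ⟨⟨x, hx1, hyI⟩, rfl⟩

theorem ker_resLiftedToKerPsi (ha1 : a ∈ ⋀[k]^1 (RIdx n →₀ k)) (ha : a ≠ 0) :
    LinearMap.ker (resLiftedToKerPsi ha1) = (k ∙ a).comap (resLiftedCocycles a).subtype := by
  ext x
  rw [LinearMap.mem_ker, Submodule.mem_comap, Submodule.subtype_apply, ← Submodule.coe_eq_zero,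
    ← Submodule.coe_eq_zero]
  change a * x = 0 ↔ _
  constructor
  · exact mem_span_singleton_of_mul_eq_zero ha1 ha x.2.1
  · intro hx
    obtain ⟨c, hc⟩ := Submodule.mem_span_singleton.mp hx
    rw [← hc, mul_smul_comm, mul_self_eq_zero_of_mem_exteriorPower_one ha1, smul_zero]

def resLiftedToH1 : resLiftedCocycles a →ₗ[k] resH1 (resπ k n a) :=
  (resB1 _).mkQ ∘ₗ LinearMap.codRestrict (resZ1 _)
    ((resπ k n).toLinearMap ∘ₗ (resLiftedCocycles a).subtype)
    fun x => ⟨⟨x, x.2.1, rfl⟩, by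
      change resπ k n a * resπ k n x = 0
      rw [← map_mul, resπ_eq_zero_iff]
      exact x.2.2⟩

theorem resLiftedToH1_surjective : Function.Surjective (resLiftedToH1 (a := a)) := by
  refine (Submodule.mkQ_surjective _).comp ?_
  rintro ⟨_, ⟨x, hx1, rfl⟩, hx⟩
  refine ⟨⟨x, hx1, ?_⟩, rfl⟩
  change resπ k n a * resπ k n x = 0 at hx
  rwa [← map_mul, resπ_eq_zero_iff] at hx

theorem resπ_mem_map_mulLeft_resAmod_zero_iff {x : Egen k n}
    (ha1 : a ∈ ⋀[k]^1 (RIdx n →₀ k)) (hx1 : x ∈ ⋀[k]^1 (RIdx n →₀ k)) :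
    resπ k n x ∈ (resAmod k n 0).map (LinearMap.mulLeft k (resπ k n a)) ↔ x ∈ k ∙ a := by
  have hsmul (c : k) : resπ k n a * resπ k n (algebraMap k _ c) = resπ k n (c • a) := by
    rw [← map_mul, ← Algebra.commutes, Algebra.smul_def]
  rw [Submodule.mem_span_singleton]
  constructor
  · rintro ⟨_, ⟨z, hz0, rfl⟩, hz⟩
    obtain ⟨c, rfl⟩ := mem_exteriorPower_zero_iff.mp hz0
    refine ⟨c, (sub_eq_zero.mp (eq_zero_of_mem_exteriorPower_one_of_mem_resIdeal
      (sub_mem hx1 (Submodule.smul_mem _ c ha1)) ?_)).symm⟩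
    rw [← resπ_eq_zero_iff, map_sub, sub_eq_zero, ← hsmul]
    exact hz.symm
  · rintro ⟨c, rfl⟩
    exact ⟨_, ⟨_, mem_exteriorPower_zero_iff.mpr ⟨c, rfl⟩, rfl⟩, hsmul c⟩

theorem ker_resLiftedToH1 (ha1 : a ∈ ⋀[k]^1 (RIdx n →₀ k)) :
    LinearMap.ker (resLiftedToH1 (a := a)) = (k ∙ a).comap (resLiftedCocycles a).subtype := by
  ext x
  rw [LinearMap.mem_ker, resLiftedToH1, LinearMap.comp_apply, Submodule.mkQ_apply,
    Submodule.Quotient.mk_eq_zero]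
  exact resπ_mem_map_mulLeft_resAmod_zero_iff ha1 x.2.1

def resH1EquivKerPsi (ha1 : a ∈ ⋀[k]^1 (RIdx n →₀ k)) (ha : a ≠ 0) :
    resH1 (resπ k n a) ≃ₗ[k] LinearMap.ker (resPsi k n a) :=
  LinearMap.equivOfSurjectiveOfKerEq (U := LinearMap.ker (resPsi k n a))
    resLiftedToH1_surjective (resLiftedToKerPsi_surjective ha1 ha)
    ((ker_resLiftedToH1 ha1).trans (ker_resLiftedToKerPsi ha1 ha).symm)

end

theorem H1_iso_ker_psi_general
    (k : Type) [Field k] (n : ℕ)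
    (a : Egen k n) (ha1 : a ∈ ⋀[k]^1 (RIdx n →₀ k)) (ha : a ≠ 0) :
    Nonempty
      ((↥(resAmod k n 1 ⊓ LinearMap.ker (LinearMap.mulLeft k (resπ k n a))) ⧸
          Submodule.comap
            (resAmod k n 1 ⊓ LinearMap.ker (LinearMap.mulLeft k (resπ k n a))).subtype
            (Submodule.map (LinearMap.mulLeft k (resπ k n a)) (resAmod k n 0)))
        ≃ₗ[k] ↥(LinearMap.ker (resPsi k n a))) ∧
    (resπ k n a ∈ resR1 k n ↔ ¬ Function.Injective (resPsi k n a)) := by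
  let e := resH1EquivKerPsi ha1 ha
  refine ⟨⟨e⟩, ?_⟩
  rw [resπ_mem_resR1_iff ha1, e.toEquiv.nontrivial_congr, Submodule.nontrivial_iff_ne_bot, Ne,
    LinearMap.ker_eq_bot]

/-- For `n ≥ 2` and nonzero `a ∈ A¹ = E¹`, the cohomology
`H¹(A, δ_a) = ker(δ_a : A¹ → A²)/im(δ_a : A⁰ → A¹)` is `k`-linearly isomorphic to the
kernel of `ψ_a : I² → E³`, `x ↦ a·x`; in particular `a ∈ R¹` iff `ψ_a` is not injective. -/
theorem H1_iso_ker_psi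
    (k : Type) [Field k] [IsAlgClosed k] [CharZero k] (n : ℕ) (hn : 2 ≤ n)
    (a : Egen k n) (ha1 : a ∈ ⋀[k]^1 (RIdx n →₀ k)) (ha : a ≠ 0) :
    Nonempty
      ((↥(resAmod k n 1 ⊓ LinearMap.ker (LinearMap.mulLeft k (resπ k n a))) ⧸
          Submodule.comap
            (resAmod k n 1 ⊓ LinearMap.ker (LinearMap.mulLeft k (resπ k n a))).subtype
            (Submodule.map (LinearMap.mulLeft k (resπ k n a)) (resAmod k n 0)))
        ≃ₗ[k] ↥(LinearMap.ker (resPsi k n a))) ∧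
    (resπ k n a ∈ resR1 k n ↔ ¬ Function.Injective (resPsi k n a)) :=
  H1_iso_ker_psi_general k n a ha1 ha
end
end

section
/- Let n ≥ 3 and 1 ≤ i < j < k ≤ n, and let a = Σ_{p≠q} a_{p,q} e_{p,q} ∈ E¹ be an element of C_{i,j,k}, i.e., a_{j,i} + a_{k,i} = 0, a_{i,j} + a_{k,j} = 0, a_{i,k} + a_{j,k} = 0, and a_{p,q} = 0 whenever {p,q} ⊄ {i,j,k}. Then in the exterior algebra E one has the identities a · (a_{j,i} τ^k_{i,j} − a_{i,k} τ^i_{j,k}) = 0 and a · (a_{i,j} τ^k_{i,j} − a_{i,k} τ^j_{i,k}) = 0. -/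
/-! With `u₁ = e_{j,i} - e_{m,i}`, `u₂ = e_{i,j} - e_{m,j}`, `u₃ = e_{i,m} - e_{j,m}`, the
conditions say `a = a_{j,i} u₁ + a_{i,j} u₂ + a_{i,m} u₃`, while `τ^m_{i,j} = u₁ u₂`,
`τ^i_{j,m} = u₂ u₃` and `τ^j_{i,m} = -u₁ u₃`. Hence the two factors are `a u₂` and `u₁ a`, and
both are killed by left multiplication with `a` because `a² = 0` and degree-one elements
anticommute. -/

namespace ExteriorAlgebra

variable {R M : Type*} [CommRing R] [AddCommGroup M] [Module R M]

theorem ι_mul_ι_mul_eq_zero (x : M) (y : ExteriorAlgebra R M) : ι R x * (ι R x * y) = 0 := by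
  rw [← mul_assoc, ι_sq_zero, zero_mul]

theorem ι_mul_ι_mul_ι_eq_zero (x y : M) : ι R x * (ι R y * ι R x) = 0 := by
  rw [← mul_assoc, eq_neg_of_add_eq_zero_left (ι_add_mul_swap x y), neg_mul, mul_assoc,
    ι_sq_zero, mul_zero, neg_zero]

variable {A B C : R} {x y z : M} {v : M}

theorem smul_ι_mul_ι_sub_smul_ι_mul_ι (hv : v = A • x + B • y + C • z) :
    A • (ι R x * ι R y) - C • (ι R y * ι R z) = ι R v * ι R y := by
  subst hv
  have hzy := neg_eq_of_add_eq_zero_right (ι_add_mul_swap (R := R) y z)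
  simp only [map_add, map_smul, add_mul, smul_mul_assoc, ι_sq_zero, smul_zero, add_zero, ← hzy,
    smul_neg, sub_eq_add_neg]

theorem smul_ι_mul_ι_add_smul_ι_mul_ι (hv : v = A • x + B • y + C • z) :
    B • (ι R x * ι R y) + C • (ι R x * ι R z) = ι R x * ι R v := by
  subst hv
  simp only [map_add, map_smul, mul_add, mul_smul_comm, ι_sq_zero, smul_zero, zero_add]

end ExteriorAlgebra

open Finsupp in
theorem eq_smul_generators_of_mem_C3 {k : Type} [Field k] {n : ℕ} {i j m : Fin n}
    (hij : i ≠ j) (him : i ≠ m) (hjm : j ≠ m) {v : RIdx n →₀ k}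
    (h1 : v ⟨(j, i), hij.symm⟩ + v ⟨(m, i), him.symm⟩ = 0)
    (h2 : v ⟨(i, j), hij⟩ + v ⟨(m, j), hjm.symm⟩ = 0)
    (h3 : v ⟨(i, m), him⟩ + v ⟨(j, m), hjm⟩ = 0)
    (h4 : ∀ x : RIdx n, ¬ (({x.1.1, x.1.2} : Finset (Fin n)) ⊆ {i, j, m}) → v x = 0) :
    v = v ⟨(j, i), hij.symm⟩ •
        (single ⟨(j, i), hij.symm⟩ 1 - single ⟨(m, i), him.symm⟩ 1) +
      v ⟨(i, j), hij⟩ • (single ⟨(i, j), hij⟩ 1 - single ⟨(m, j), hjm.symm⟩ 1) +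
      v ⟨(i, m), him⟩ • (single ⟨(i, m), him⟩ 1 - single ⟨(j, m), hjm⟩ 1) := by
  ext ⟨⟨p, q⟩, hpq⟩
  by_cases hs : ({p, q} : Finset (Fin n)) ⊆ {i, j, m}
  · simp only [Finset.insert_subset_iff, Finset.singleton_subset_iff, Finset.mem_insert,
      Finset.mem_singleton] at hs
    obtain ⟨hp | hp | hp, hq | hq | hq⟩ := hs <;> subst hp hq <;>
      simp [hij, him, hjm, hij.symm, him.symm, hjm.symm] at hpq ⊢ <;>
      first | linear_combination h1 | linear_combination h2 | linear_combination h3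
  · rw [h4 _ hs]
    have hne : ∀ a ∈ ({i, j, m} : Finset (Fin n)), ∀ b ∈ ({i, j, m} : Finset (Fin n)),
        ¬(a = p ∧ b = q) := by
      rintro a ha b hb ⟨rfl, rfl⟩
      exact hs (Finset.insert_subset ha (Finset.singleton_subset_iff.mpr hb))
    simp [hne]

open ExteriorAlgebra Finsupp in
theorem C3_kernel_elements_general
    (k : Type) [Field k] (n : ℕ)
    (i j m : Fin n) (hij : i < j) (hjm : j < m)
    (v : RIdx n →₀ k)
    (h1 : v ⟨(j, i), hij.ne'⟩ + v ⟨(m, i), (hij.trans hjm).ne'⟩ = 0)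
    (h2 : v ⟨(i, j), hij.ne⟩ + v ⟨(m, j), hjm.ne'⟩ = 0)
    (h3 : v ⟨(i, m), (hij.trans hjm).ne⟩ + v ⟨(j, m), hjm.ne⟩ = 0)
    (h4 : ∀ x : RIdx n, ¬ (({x.1.1, x.1.2} : Finset (Fin n)) ⊆ {i, j, m}) → v x = 0) :
    ExteriorAlgebra.ι k v *
        (v ⟨(j, i), hij.ne'⟩ •
            ((egen k m i (hij.trans hjm).ne' - egen k j i hij.ne') *
              (egen k m j hjm.ne' - egen k i j hij.ne)) -
          v ⟨(i, m), (hij.trans hjm).ne⟩ •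
            ((egen k i j hij.ne - egen k m j hjm.ne') *
              (egen k i m (hij.trans hjm).ne - egen k j m hjm.ne))) = 0 ∧
    ExteriorAlgebra.ι k v *
        (v ⟨(i, j), hij.ne⟩ •
            ((egen k m i (hij.trans hjm).ne' - egen k j i hij.ne') *
              (egen k m j hjm.ne' - egen k i j hij.ne)) -
          v ⟨(i, m), (hij.trans hjm).ne⟩ •
            ((egen k j i hij.ne' - egen k m i (hij.trans hjm).ne') *
              (egen k j m hjm.ne - egen k i m (hij.trans hjm).ne))) = 0 := by
  have him := (hij.trans hjm).ne
  set u₁ : RIdx n →₀ k := single ⟨(j, i), hij.ne'⟩ 1 - single ⟨(m, i), him.symm⟩ 1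
  set u₂ : RIdx n →₀ k := single ⟨(i, j), hij.ne⟩ 1 - single ⟨(m, j), hjm.ne'⟩ 1
  set u₃ : RIdx n →₀ k := single ⟨(i, m), him⟩ 1 - single ⟨(j, m), hjm.ne⟩ 1
  have hv : v = _ • u₁ + _ • u₂ + _ • u₃ :=
    eq_smul_generators_of_mem_C3 hij.ne him hjm.ne h1 h2 h3 h4
  have hτ₁ :
      (egen k m i him.symm - egen k j i hij.ne') * (egen k m j hjm.ne' - egen k i j hij.ne) =
        ι k u₁ * ι k u₂ := by
    rw [← neg_mul_neg, neg_sub, neg_sub]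
    simp only [u₁, u₂, map_sub]
    rfl
  have hτ₂ : (egen k i j hij.ne - egen k m j hjm.ne') * (egen k i m him - egen k j m hjm.ne) =
      ι k u₂ * ι k u₃ := by
    simp only [u₂, u₃, map_sub]
    rfl
  have hτ₃ : (egen k j i hij.ne' - egen k m i him.symm) * (egen k j m hjm.ne - egen k i m him) =
      -(ι k u₁ * ι k u₃) := by
    rw [← mul_neg]
    simp only [u₁, u₃, map_sub, neg_sub]
    rfl
  rw [hτ₁, hτ₂, hτ₃, smul_neg, sub_neg_eq_add, smul_ι_mul_ι_sub_smul_ι_mul_ι hv,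
    smul_ι_mul_ι_add_smul_ι_mul_ι hv]
  exact ⟨ι_mul_ι_mul_eq_zero _ _, ι_mul_ι_mul_ι_eq_zero _ _⟩

/-- For `n ≥ 3`, `i < j < m`, and `a = Σ a_{p,q} e_{p,q} ∈ C_{i,j,m}` (that is,
`a_{j,i} + a_{m,i} = 0`, `a_{i,j} + a_{m,j} = 0`, `a_{i,m} + a_{j,m} = 0`, and `a_{p,q} = 0`
whenever `{p,q} ⊄ {i,j,m}`), one has `a·(a_{j,i} τ^m_{i,j} − a_{i,m} τ^i_{j,m}) = 0` and
`a·(a_{i,j} τ^m_{i,j} − a_{i,m} τ^j_{i,m}) = 0` in the exterior algebra `E`. -/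
theorem C3_kernel_elements
    (k : Type) [Field k] [CharZero k] (n : ℕ) (hn : 3 ≤ n)
    (i j m : Fin n) (hij : i < j) (hjm : j < m)
    (v : RIdx n →₀ k)
    (h1 : v ⟨(j, i), hij.ne'⟩ + v ⟨(m, i), (hij.trans hjm).ne'⟩ = 0)
    (h2 : v ⟨(i, j), hij.ne⟩ + v ⟨(m, j), hjm.ne'⟩ = 0)
    (h3 : v ⟨(i, m), (hij.trans hjm).ne⟩ + v ⟨(j, m), hjm.ne⟩ = 0)
    (h4 : ∀ x : RIdx n, ¬ (({x.1.1, x.1.2} : Finset (Fin n)) ⊆ {i, j, m}) → v x = 0) :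
    ExteriorAlgebra.ι k v *
        (v ⟨(j, i), hij.ne'⟩ •
            ((egen k m i (hij.trans hjm).ne' - egen k j i hij.ne') *
              (egen k m j hjm.ne' - egen k i j hij.ne)) -
          v ⟨(i, m), (hij.trans hjm).ne⟩ •
            ((egen k i j hij.ne - egen k m j hjm.ne') *
              (egen k i m (hij.trans hjm).ne - egen k j m hjm.ne))) = 0 ∧
    ExteriorAlgebra.ι k v *
        (v ⟨(i, j), hij.ne⟩ •
            ((egen k m i (hij.trans hjm).ne' - egen k j i hij.ne') *
              (egen k m j hjm.ne' - egen k i j hij.ne)) -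
          v ⟨(i, m), (hij.trans hjm).ne⟩ •
            ((egen k j i hij.ne' - egen k m i (hij.trans hjm).ne') *
              (egen k j m hjm.ne - egen k i m (hij.trans hjm).ne))) = 0 :=
  C3_kernel_elements_general k n i j m hij hjm v h1 h2 h3 h4
end

section
/- Let n ≥ 3, let a = Σ_{p≠q} a_{p,q} e_{p,q} ∈ E¹, and let 1 ≤ i < j ≤ n and k ∉ {i,j}. Then in the exterior algebra E, a · τ^k_{i,j} = (a_{j,i} + a_{k,i}) e_{j,i} e_{k,i} (e_{k,j} − e_{i,j}) − (a_{i,j} + a_{k,j}) e_{i,j} e_{k,j} (e_{k,i} − e_{j,i}) + (a_{i,k} e_{i,k} + a_{j,k} e_{j,k}) τ^k_{i,j} + Σ_{{p,q} ⊄ {i,j,k}} a_{p,q} e_{p,q} τ^k_{i,j}, where the last sum is over all ordered pairs (p,q) with p ≠ q and {p,q} not contained in {i,j,k}. -/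
/-! Both sides are linear in `a`, so it suffices to multiply
`τ^m_{i,j} = (e_{m,i} - e_{j,i})(e_{m,j} - e_{i,j})` by each generator. Only the four generators
occurring in `τ` need work: for them one factor of `τ` collapses, since `e ∧ e = 0` and degree-one
elements anticommute. -/

namespace ExteriorAlgebra

variable {R : Type*} [CommRing R] {M : Type*} [AddCommGroup M] [Module R M]

theorem ι_mul_ι_anticomm (x y : M) : ι R x * ι R y = -(ι R y * ι R x) :=
  eq_neg_of_add_eq_zero_left (ι_add_mul_swap x y)

theorem ι_mul_ι_sub_ι_self (a b : M) : ι R b * (ι R a - ι R b) = ι R b * ι R a := by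
  rw [mul_sub, ι_sq_zero, sub_zero]

theorem ι_self_mul_ι_sub_ι (a b : M) : ι R a * (ι R a - ι R b) = ι R b * ι R a := by
  rw [mul_sub, ι_sq_zero, zero_sub, ← ι_mul_ι_anticomm]

theorem ι_mul_ι_sub_ι_self_mul (a b : M) (z : ExteriorAlgebra R M) :
    ι R b * ((ι R a - ι R b) * z) = ι R b * ι R a * z := by
  rw [← mul_assoc, ι_mul_ι_sub_ι_self]

theorem ι_self_mul_ι_sub_ι_mul (a b : M) (z : ExteriorAlgebra R M) :
    ι R a * ((ι R a - ι R b) * z) = ι R b * ι R a * z := by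
  rw [← mul_assoc, ι_self_mul_ι_sub_ι]

theorem ι_mul_mul_ι_sub_ι_self (a b c d : M) :
    ι R d * ((ι R a - ι R b) * (ι R c - ι R d)) = -(ι R d * ι R c * (ι R a - ι R b)) := by
  rw [← map_sub, ← map_sub, ι_mul_ι_anticomm (a - b), mul_neg, ← mul_assoc, map_sub, map_sub,
    ι_mul_ι_sub_ι_self]

theorem ι_self_mul_mul_ι_sub_ι (a b c d : M) :
    ι R c * ((ι R a - ι R b) * (ι R c - ι R d)) = -(ι R d * ι R c * (ι R a - ι R b)) := by
  rw [← map_sub, ← map_sub, ι_mul_ι_anticomm (a - b), mul_neg, ← mul_assoc, map_sub, map_sub,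
    ι_self_mul_ι_sub_ι]

theorem ι_eq_sum_smul_ι_single {ι' : Type*} [Fintype ι'] (v : ι' →₀ R) :
    ι R v = ∑ x, v x • ι R (Finsupp.single x 1) := by
  conv_lhs => rw [← Finsupp.univ_sum_single v]
  simp only [map_sum, ← map_smul, Finsupp.smul_single_one]

end ExteriorAlgebra

theorem filter_pair_subset_triple_eq {n : ℕ} {i j m : Fin n}
    (hij : i ≠ j) (hmi : m ≠ i) (hmj : m ≠ j) :
    Finset.univ.filter (fun x : RIdx n => ({x.1.1, x.1.2} : Finset (Fin n)) ⊆ {i, j, m}) =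
      {⟨(j, i), hij.symm⟩, ⟨(m, i), hmi⟩, ⟨(i, j), hij⟩, ⟨(m, j), hmj⟩, ⟨(i, m), hmi.symm⟩,
        ⟨(j, m), hmj.symm⟩} := by
  ext ⟨⟨p, q⟩, hpq⟩
  simp only [Finset.mem_filter, Finset.mem_univ, true_and, Finset.insert_subset_iff,
    Finset.singleton_subset_iff, Finset.mem_insert, Finset.mem_singleton, Subtype.mk.injEq,
    Prod.mk.injEq]
  grind

theorem mul_tau_formula_general
    (k : Type) [Field k] (n : ℕ)
    (v : RIdx n →₀ k) (i j m : Fin n) (hij : i < j) (hmi : m ≠ i) (hmj : m ≠ j) :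
    ExteriorAlgebra.ι k v *
        ((egen k m i hmi - egen k j i hij.ne') * (egen k m j hmj - egen k i j hij.ne)) =
      (v ⟨(j, i), hij.ne'⟩ + v ⟨(m, i), hmi⟩) •
          (egen k j i hij.ne' * egen k m i hmi * (egen k m j hmj - egen k i j hij.ne)) -
        (v ⟨(i, j), hij.ne⟩ + v ⟨(m, j), hmj⟩) •
          (egen k i j hij.ne * egen k m j hmj * (egen k m i hmi - egen k j i hij.ne')) +
        (v ⟨(i, m), hmi.symm⟩ • egen k i m hmi.symm +
            v ⟨(j, m), hmj.symm⟩ • egen k j m hmj.symm) *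
          ((egen k m i hmi - egen k j i hij.ne') * (egen k m j hmj - egen k i j hij.ne)) +
        ∑ x ∈ Finset.univ.filter
            (fun x : RIdx n => ¬ (({x.1.1, x.1.2} : Finset (Fin n)) ⊆ {i, j, m})),
          v x • (egen' k x *
            ((egen k m i hmi - egen k j i hij.ne') *
              (egen k m j hmj - egen k i j hij.ne))) := by
  rw [ExteriorAlgebra.ι_eq_sum_smul_ι_single, Finset.sum_mul,
    ← Finset.sum_filter_add_sum_filter_not _
      (fun x : RIdx n => ({x.1.1, x.1.2} : Finset (Fin n)) ⊆ {i, j, m}),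
    filter_pair_subset_triple_eq hij.ne hmi hmj]
  simp only [Finset.sum_insert, Finset.mem_insert, Finset.mem_singleton, Subtype.mk.injEq,
    Prod.mk.injEq, hij.ne, hij.ne', hmi, hmi.symm, hmj, hmj.symm, and_false, false_and,
    or_self, not_false_eq_true, Finset.sum_singleton, add_mul, smul_mul_assoc, egen, egen']
  rw [ExteriorAlgebra.ι_mul_ι_sub_ι_self_mul, ExteriorAlgebra.ι_self_mul_ι_sub_ι_mul,
    ExteriorAlgebra.ι_mul_mul_ι_sub_ι_self, ExteriorAlgebra.ι_self_mul_mul_ι_sub_ι]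
  module

/-- For `n ≥ 3`, `a = Σ a_{p,q} e_{p,q} ∈ E¹`, `i < j`, and `m ∉ {i,j}`:
`a·τ^m_{i,j} = (a_{j,i} + a_{m,i}) e_{j,i} e_{m,i} (e_{m,j} − e_{i,j})
  − (a_{i,j} + a_{m,j}) e_{i,j} e_{m,j} (e_{m,i} − e_{j,i})
  + (a_{i,m} e_{i,m} + a_{j,m} e_{j,m}) τ^m_{i,j}
  + Σ_{{p,q} ⊄ {i,j,m}} a_{p,q} e_{p,q} τ^m_{i,j}`,
the last sum being over all ordered pairs `(p,q)`, `p ≠ q`, with `{p,q} ⊄ {i,j,m}`. -/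
theorem mul_tau_formula
    (k : Type) [Field k] [CharZero k] (n : ℕ) (hn : 3 ≤ n)
    (v : RIdx n →₀ k) (i j m : Fin n) (hij : i < j) (hmi : m ≠ i) (hmj : m ≠ j) :
    ExteriorAlgebra.ι k v *
        ((egen k m i hmi - egen k j i hij.ne') * (egen k m j hmj - egen k i j hij.ne)) =
      (v ⟨(j, i), hij.ne'⟩ + v ⟨(m, i), hmi⟩) •
          (egen k j i hij.ne' * egen k m i hmi * (egen k m j hmj - egen k i j hij.ne)) -
        (v ⟨(i, j), hij.ne⟩ + v ⟨(m, j), hmj⟩) •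
          (egen k i j hij.ne * egen k m j hmj * (egen k m i hmi - egen k j i hij.ne')) +
        (v ⟨(i, m), hmi.symm⟩ • egen k i m hmi.symm +
            v ⟨(j, m), hmj.symm⟩ • egen k j m hmj.symm) *
          ((egen k m i hmi - egen k j i hij.ne') * (egen k m j hmj - egen k i j hij.ne)) +
        ∑ x ∈ Finset.univ.filter
            (fun x : RIdx n => ¬ (({x.1.1, x.1.2} : Finset (Fin n)) ⊆ {i, j, m})),
          v x • (egen' k x *
            ((egen k m i hmi - egen k j i hij.ne') *
              (egen k m j hmj - egen k i j hij.ne))) :=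
  mul_tau_formula_general k n v i j m hij hmi hmj
end

section
/- Let n ≥ 3 and let a = Σ_{p≠q} a_{p,q} e_{p,q} ∈ E¹ satisfy: a_{r,s} = 0 whenever {r,s} ⊄ {1,2,3}; a_{2,1} ≠ 0; a_{p,q} ≠ 0 for some ordered pair (p,q) with {p,q} ⊂ {1,2,3} and {p,q} ≠ {1,2}; and at least one of a_{2,1} + a_{3,1}, a_{1,2} + a_{3,2}, a_{1,3} + a_{2,3} is nonzero. Then the map ψ_a : I² → E³, x ↦ a·x, is injective, where I² = I ∩ E². -/
/-!
Let `z ∈ I²` with `a · z = 0`, where `a = ι v`. Contracting by a form `d` with `d v = 1` shows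
`z = v ∧ w` with `d w = 0`; with `x_α` the coordinate forms we take `d = x₂₁ / v₂₁`, so
`w₂₁ = 0`. If two linear forms `φ, ψ` are such that the algebra map `E → ⋀(k²)` induced by
`(φ, ψ)` kills the generators of `I`, it kills `I`, whence `φ v · ψ w = φ w · ψ v`. Two families
of such pairs suffice: coordinate pairs `(x_α, x_β)` where `α, β` have the same target or share
no generator, and the pairs `(x_ab, x_ai + x_bi)` for distinct `a, b, i`. Against `v₂₁ ≠ 0` they
kill every coordinate of `w` with an index outside `{1,2,3}`; the nine relations among the six
pairs inside `{1,2,3}` then force `w = 0` under the remaining hypotheses on `v`, so `z = 0`.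
-/

open ExteriorAlgebra

namespace ExteriorAlgebra

variable {R M : Type*} [CommRing R] [AddCommGroup M] [Module R M]

theorem ι_mul_ι_eq_det_smul (u u' : R × R) :
    ι R u * ι R u' = (u.1 * u'.2 - u'.1 * u.2) • (ι R (1, 0) * ι R (0, 1)) := by
  have hu : ∀ x : R × R, ι R x = x.1 • ι R (1, 0) + x.2 • ι R (0, 1) := fun x => by
    rw [← map_smul, ← map_smul, ← map_add]; congr 1; ext <;> simp
  have hswap := ι_add_mul_swap (R := R) ((0 : R), (1 : R)) ((1 : R), (0 : R))
  rw [hu u, hu u', add_mul, mul_add, mul_add, smul_mul_smul_comm, smul_mul_smul_comm,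
    smul_mul_smul_comm, smul_mul_smul_comm, ι_sq_zero, ι_sq_zero,
    eq_neg_of_add_eq_zero_left hswap, mul_comm u'.1 u.2]
  module

theorem prod_ι_mul_ι_eq_zero_iff (u u' : R × R) :
    ι R u * ι R u' = 0 ↔ u.1 * u'.2 = u'.1 * u.2 := by
  rw [ι_mul_ι_eq_det_smul]
  refine ⟨fun h => ?_, fun h => by rw [h, sub_self, zero_smul]⟩
  have := congrArg (fun x => algebraMapInv (CliffordAlgebra.contractLeft (Q := 0)
    (LinearMap.fst R R R) (CliffordAlgebra.contractLeft (Q := 0) (LinearMap.snd R R R) x))) h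
  simpa [CliffordAlgebra.contractLeft_ι_mul, CliffordAlgebra.contractLeft_ι, sub_eq_zero,
    eq_comm] using this

theorem map_prod_ι_mul_ι_eq_zero_iff (φ ψ : Module.Dual R M) (x y : M) :
    map (φ.prod ψ) (ι R x * ι R y) = 0 ↔ φ x * ψ y = φ y * ψ x := by
  rw [map_mul, map_apply_ι, map_apply_ι, prod_ι_mul_ι_eq_zero_iff]
  rfl

theorem apply_mul_apply_eq_of_ι_mul_ι_mem_span {S : Set (ExteriorAlgebra R M)}
    {φ ψ : Module.Dual R M} (hS : ∀ s ∈ S, map (φ.prod ψ) s = 0) {x y : M}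
    (h : ι R x * ι R y ∈ TwoSidedIdeal.span S) : φ x * ψ y = φ y * ψ x := by
  have hle : TwoSidedIdeal.span S ≤ TwoSidedIdeal.ker (map (φ.prod ψ)) :=
    TwoSidedIdeal.span_le.2 fun s hs => (TwoSidedIdeal.mem_ker _).2 (hS s hs)
  exact (map_prod_ι_mul_ι_eq_zero_iff φ ψ x y).1 ((TwoSidedIdeal.mem_ker _).1 (hle h))

theorem exists_eq_ι_mul_ι_of_ι_mul_eq_zero {v : M} {d : Module.Dual R M} (hd : d v = 1)
    {z : ExteriorAlgebra R M} (hz : z ∈ ⋀[R]^2 M) (h : ι R v * z = 0) :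
    ∃ w, d w = 0 ∧ z = ι R v * ι R w := by
  let c := CliffordAlgebra.contractLeft (Q := 0) d
  have hzc : z = ι R v * c z := by
    have := congrArg c h
    rwa [map_zero, CliffordAlgebra.contractLeft_ι_mul, hd, one_smul, sub_eq_zero] at this
  have hrange : c z ∈ LinearMap.range (ι R (M := M)) := by
    rw [exteriorPower, pow_two] at hz
    refine Submodule.mul_induction_on hz ?_ fun x y hx hy => map_add c x y ▸ add_mem hx hy
    rintro _ ⟨s, rfl⟩ _ ⟨t, rfl⟩
    refine ⟨d s • t - d t • s, ?_⟩
    rw [map_sub, map_smul, map_smul, CliffordAlgebra.contractLeft_ι_mul,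
      CliffordAlgebra.contractLeft_ι, ← Algebra.commutes, ← Algebra.smul_def]
  obtain ⟨w, hw⟩ := hrange
  refine ⟨w, ?_, by rw [hzc, ← hw]⟩
  have := CliffordAlgebra.contractLeft_contractLeft (Q := 0) d z
  rwa [← hw, CliffordAlgebra.contractLeft_ι, algebraMap_eq_zero_iff] at this

end ExteriorAlgebra

section Annihilators

variable {k : Type} [Field k] {n : ℕ}

noncomputable def resBasis (p q : Fin n) (h : p ≠ q) : RIdx n →₀ k :=
  Finsupp.single ⟨(p, q), h⟩ 1

/-- Equivalently, the 2-form `φ ∧ ψ` vanishes on `I²`. -/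
def AnnihilatesResGens (φ ψ : Module.Dual k (RIdx n →₀ k)) : Prop :=
  ∀ g ∈ resGens k n, map (φ.prod ψ) g = 0

theorem annihilatesResGens_of {φ ψ : Module.Dual k (RIdx n →₀ k)}
    (hη : ∀ i j (h : i ≠ j), φ (resBasis i j h) * ψ (resBasis j i h.symm) =
      φ (resBasis j i h.symm) * ψ (resBasis i j h))
    (hτ : ∀ i j m (hij : i ≠ j) (hmi : m ≠ i) (hmj : m ≠ j),
      φ (resBasis m i hmi - resBasis j i hij.symm) * ψ (resBasis m j hmj - resBasis i j hij) =
      φ (resBasis m j hmj - resBasis i j hij) * ψ (resBasis m i hmi - resBasis j i hij.symm)) :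
    AnnihilatesResGens φ ψ := by
  rintro g (⟨i, j, hij, rfl⟩ | ⟨i, j, m, hij, hmi, hmj, rfl⟩)
  · exact (map_prod_ι_mul_ι_eq_zero_iff φ ψ _ _).2 (hη i j hij.ne)
  · simp only [egen, ← map_sub]
    exact (map_prod_ι_mul_ι_eq_zero_iff φ ψ _ _).2 (hτ i j m hij.ne hmi hmj)

theorem lapply_resBasis (a b p q : Fin n) (hab : a ≠ b) (h : p ≠ q) :
    Finsupp.lapply (R := k) ⟨(a, b), hab⟩ (resBasis p q h) =
      if p = a ∧ q = b then (1 : k) else 0 := by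
  simp [resBasis, Finsupp.single_apply]

theorem annihilatesResGens_lapply_lapply (a b c d : Fin n) (hab : a ≠ b) (hcd : c ≠ d)
    (h : b = d ∨ (a ≠ c ∧ a ≠ d ∧ c ≠ b)) :
    AnnihilatesResGens (k := k) (Finsupp.lapply ⟨(a, b), hab⟩) (Finsupp.lapply ⟨(c, d), hcd⟩) := by
  apply annihilatesResGens_of
  · intro i j hij
    simp only [lapply_resBasis]
    split_ifs <;> grind
  · intro i j m hij hmi hmj
    simp only [map_sub, lapply_resBasis]
    split_ifs <;> grind

theorem annihilatesResGens_lapply_add (a b i : Fin n) (hab : a ≠ b) (hai : a ≠ i) (hbi : b ≠ i) :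
    AnnihilatesResGens (k := k) (Finsupp.lapply ⟨(a, b), hab⟩)
      (Finsupp.lapply ⟨(a, i), hai⟩ + Finsupp.lapply ⟨(b, i), hbi⟩) := by
  apply annihilatesResGens_of
  · intro p q hpq
    simp only [LinearMap.add_apply, lapply_resBasis]
    grind
  · intro p q m hpq hmp hmq
    simp only [map_sub, LinearMap.add_apply, lapply_resBasis]
    by_cases p = b <;> by_cases q = b <;> grind

theorem AnnihilatesResGens.apply_mul_apply_eq {φ ψ : Module.Dual k (RIdx n →₀ k)}
    (h : AnnihilatesResGens φ ψ) {v w : RIdx n →₀ k} (hI : ι k v * ι k w ∈ resIdeal k n) :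
    φ v * ψ w = φ w * ψ v :=
  apply_mul_apply_eq_of_ι_mul_ι_mem_span h hI

theorem apply_eq_zero_of_annihilatesResGens {α β : RIdx n}
    (h : AnnihilatesResGens (Finsupp.lapply (R := k) α) (Finsupp.lapply β)) {v w : RIdx n →₀ k}
    (hI : ι k v * ι k w ∈ resIdeal k n) (hvα : v α ≠ 0) (hwα : w α = 0) (hvβ : v β = 0) :
    w β = 0 := by
  have := h.apply_mul_apply_eq hI
  simp only [Finsupp.lapply_apply, hwα, hvβ, zero_mul, mul_eq_zero] at this
  exact this.resolve_left hvα

end Annihilators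

/-- `a` and `b` are the coordinates of `v` and `w` on the six pairs inside `{1,2,3}`, with
`b₂₁ = 0`; each relation is `φ v · ψ w = φ w · ψ v` for one of the nine annihilating pairs. -/
theorem eq_zero_of_wedge_relations {k : Type} [Field k]
    {a12 a21 a13 a31 a23 a32 b12 b13 b31 b23 b32 : k} (h21 : a21 ≠ 0)
    (hP : a13 ≠ 0 ∨ a31 ≠ 0 ∨ a23 ≠ 0 ∨ a32 ≠ 0)
    (hQ : a21 + a31 ≠ 0 ∨ a12 + a32 ≠ 0 ∨ a13 + a23 ≠ 0)
    (r2131 : a21 * b31 = 0) (r1232 : a12 * b32 = b12 * a32) (r1323 : a13 * b23 = b13 * a23)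
    (r213 : a21 * (b23 + b13) = 0) (r231 : a23 * b31 = b23 * (a21 + a31))
    (r321 : a32 * b31 = b32 * (a31 + a21)) (r123 : a12 * (b13 + b23) = b12 * (a13 + a23))
    (r132 : a13 * (b12 + b32) = b13 * (a12 + a32))
    (r312 : a31 * (b32 + b12) = b31 * (a32 + a12)) :
    b12 = 0 ∧ b13 = 0 ∧ b31 = 0 ∧ b23 = 0 ∧ b32 = 0 := by
  have cancel {c x : k} (hc : c ≠ 0) (h : c * x = 0) : x = 0 := (mul_eq_zero.1 h).resolve_left hc
  obtain rfl : b31 = 0 := cancel h21 r2131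
  obtain rfl : b13 = -b23 := eq_neg_of_add_eq_zero_right (cancel h21 r213)
  by_cases hA : a21 + a31 = 0
  · have ha31 : a31 ≠ 0 := fun h => h21 (by linear_combination hA - h)
    obtain rfl : b32 = -b12 :=
      eq_neg_of_add_eq_zero_left (cancel ha31 (by linear_combination r312))
    by_cases hC : a13 + a23 = 0
    · have hB : a12 + a32 ≠ 0 := by tauto
      obtain rfl : b12 = 0 := cancel hB (by linear_combination -r1232)
      obtain rfl : b23 = 0 := cancel hB (by linear_combination r132)
      simp
    · obtain rfl : b12 = 0 := cancel hC (by linear_combination -r123)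
      obtain rfl : b23 = 0 := cancel hC (by linear_combination r1323)
      simp
  · obtain rfl : b23 = 0 := cancel hA (by linear_combination -r231)
    obtain rfl : b32 = 0 := cancel hA (by linear_combination -r321)
    refine ⟨?_, by simp, rfl, rfl, rfl⟩
    by_contra h12
    have ha {c : k} (h : c * b12 = 0) : c = 0 := (mul_eq_zero.1 h).resolve_right h12
    have ha13 : a13 = 0 := ha (by linear_combination r132)
    have ha23 : a23 = 0 := ha (by linear_combination -r123 - b12 * ha13)
    have ha31 : a31 = 0 := ha (by linear_combination r312)
    have ha32 : a32 = 0 := ha (by linear_combination -r1232)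
    simp [ha13, ha23, ha31, ha32] at hP

section Support

variable {k : Type} [Field k] {n : ℕ} {i1 i2 i3 : Fin n} {v w : RIdx n →₀ k}

theorem apply_eq_zero_of_fst_not_mem (n21 : i2 ≠ i1)
    (hv : ∀ x : RIdx n, ¬ ({x.1.1, x.1.2} : Finset (Fin n)) ⊆ {i1, i2, i3} → v x = 0)
    (hv21 : v ⟨(i2, i1), n21⟩ ≠ 0) (hw21 : w ⟨(i2, i1), n21⟩ = 0)
    (hI : ι k v * ι k w ∈ resIdeal k n) {b j : Fin n} (hbj : b ≠ j)
    (hb1 : b ≠ i1) (hb2 : b ≠ i2) (hb3 : b ≠ i3) : w ⟨(b, j), hbj⟩ = 0 := by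
  have hvb (j : Fin n) (h : b ≠ j) : v ⟨(b, j), h⟩ = 0 :=
    hv _ (by simp [Finset.insert_subset_iff, hb1, hb2, hb3])
  by_cases hj2 : j = i2
  · subst hj2
    have := (annihilatesResGens_lapply_add b j i1 hbj hb1 n21).apply_mul_apply_eq hI
    simp only [LinearMap.add_apply, Finsupp.lapply_apply, hvb, hw21, zero_mul, add_zero,
      zero_add] at this
    exact (mul_eq_zero.1 this.symm).resolve_right hv21
  · refine apply_eq_zero_of_annihilatesResGens ?_ hI hv21 hw21 (hvb j hbj)
    refine annihilatesResGens_lapply_lapply _ _ _ _ _ _ ?_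
    by_cases hj1 : j = i1
    · exact .inl hj1.symm
    · exact .inr ⟨Ne.symm hb2, Ne.symm hj2, hb1⟩

theorem apply_eq_zero_of_snd_not_mem (n21 : i2 ≠ i1)
    (hv : ∀ x : RIdx n, ¬ ({x.1.1, x.1.2} : Finset (Fin n)) ⊆ {i1, i2, i3} → v x = 0)
    (hv21 : v ⟨(i2, i1), n21⟩ ≠ 0) (hw21 : w ⟨(i2, i1), n21⟩ = 0)
    (hI : ι k v * ι k w ∈ resIdeal k n) {b j : Fin n} (hbj : b ≠ j)
    (hj1 : j ≠ i1) (hj2 : j ≠ i2) (hj3 : j ≠ i3) : w ⟨(b, j), hbj⟩ = 0 := by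
  have hvj (b : Fin n) (h : b ≠ j) : v ⟨(b, j), h⟩ = 0 :=
    hv _ (by simp [Finset.insert_subset_iff, hj1, hj2, hj3])
  have hw2j : w ⟨(i2, j), hj2.symm⟩ = 0 := by
    have hvj1 : v ⟨(j, i1), hj1⟩ = 0 := hv _ (by simp [Finset.insert_subset_iff, hj1, hj2, hj3])
    have := (annihilatesResGens_lapply_add i2 j i1 hj2.symm n21 hj1).apply_mul_apply_eq hI
    simp only [LinearMap.add_apply, Finsupp.lapply_apply, hvj, hw21, hvj1, zero_mul, add_zero,
      zero_add] at this
    exact (mul_eq_zero.1 this.symm).resolve_right hv21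
  by_cases hb2 : b = i2
  · subst hb2
    exact hw2j
  by_cases hb1 : b = i1
  · subst hb1
    have := (annihilatesResGens_lapply_add i2 b j n21 hj2.symm hbj).apply_mul_apply_eq hI
    simp only [LinearMap.add_apply, Finsupp.lapply_apply, hvj, hw2j, hw21, zero_mul,
      add_zero, zero_add, mul_eq_zero] at this
    exact this.resolve_left hv21
  · refine apply_eq_zero_of_annihilatesResGens ?_ hI hv21 hw21 (hvj b hbj)
    exact annihilatesResGens_lapply_lapply _ _ _ _ _ _ (.inr ⟨Ne.symm hb2, Ne.symm hj2, hb1⟩)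

theorem apply_eq_zero_of_not_subset (n21 : i2 ≠ i1)
    (hv : ∀ x : RIdx n, ¬ ({x.1.1, x.1.2} : Finset (Fin n)) ⊆ {i1, i2, i3} → v x = 0)
    (hv21 : v ⟨(i2, i1), n21⟩ ≠ 0) (hw21 : w ⟨(i2, i1), n21⟩ = 0)
    (hI : ι k v * ι k w ∈ resIdeal k n) (x : RIdx n)
    (hx : ¬ ({x.1.1, x.1.2} : Finset (Fin n)) ⊆ {i1, i2, i3}) : w x = 0 := by
  obtain ⟨⟨b, j⟩, hbj⟩ := x
  simp only [Finset.insert_subset_iff, Finset.singleton_subset_iff, Finset.mem_insert,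
    Finset.mem_singleton, not_and_or, not_or] at hx
  rcases hx with ⟨hb1, hb2, hb3⟩ | ⟨hj1, hj2, hj3⟩
  · exact apply_eq_zero_of_fst_not_mem n21 hv hv21 hw21 hI hbj hb1 hb2 hb3
  · exact apply_eq_zero_of_snd_not_mem n21 hv hv21 hw21 hI hbj hj1 hj2 hj3

theorem RIdx.eq_of_subset (n21 : i2 ≠ i1) (n31 : i3 ≠ i1) (n12 : i1 ≠ i2)
    (n32 : i3 ≠ i2) (n13 : i1 ≠ i3) (n23 : i2 ≠ i3) (x : RIdx n)
    (hx : ({x.1.1, x.1.2} : Finset (Fin n)) ⊆ {i1, i2, i3}) :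
    x = ⟨(i1, i2), n12⟩ ∨ x = ⟨(i2, i1), n21⟩ ∨ x = ⟨(i1, i3), n13⟩ ∨ x = ⟨(i3, i1), n31⟩ ∨
      x = ⟨(i2, i3), n23⟩ ∨ x = ⟨(i3, i2), n32⟩ := by
  obtain ⟨⟨p, q⟩, hpq⟩ := x
  simp only [Finset.insert_subset_iff, Finset.singleton_subset_iff, Finset.mem_insert,
    Finset.mem_singleton] at hx
  obtain ⟨hp | hp | hp, hq | hq | hq⟩ := hx <;> subst hp hq <;> simp at hpq ⊢

theorem eq_zero_of_wedge_mem_resIdeal (n21 : i2 ≠ i1) (n31 : i3 ≠ i1) (n12 : i1 ≠ i2)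
    (n32 : i3 ≠ i2) (n13 : i1 ≠ i3) (n23 : i2 ≠ i3)
    (hv : ∀ x : RIdx n, ¬ ({x.1.1, x.1.2} : Finset (Fin n)) ⊆ {i1, i2, i3} → v x = 0)
    (hv21 : v ⟨(i2, i1), n21⟩ ≠ 0)
    (hP : v ⟨(i1, i3), n13⟩ ≠ 0 ∨ v ⟨(i3, i1), n31⟩ ≠ 0 ∨ v ⟨(i2, i3), n23⟩ ≠ 0 ∨
      v ⟨(i3, i2), n32⟩ ≠ 0)
    (hQ : v ⟨(i2, i1), n21⟩ + v ⟨(i3, i1), n31⟩ ≠ 0 ∨ v ⟨(i1, i2), n12⟩ + v ⟨(i3, i2), n32⟩ ≠ 0 ∨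
      v ⟨(i1, i3), n13⟩ + v ⟨(i2, i3), n23⟩ ≠ 0)
    (hw21 : w ⟨(i2, i1), n21⟩ = 0) (hI : ι k v * ι k w ∈ resIdeal k n) : w = 0 := by
  have rel {φ ψ : Module.Dual k (RIdx n →₀ k)} (h : AnnihilatesResGens φ ψ) :=
    h.apply_mul_apply_eq hI
  have r2131 := rel (annihilatesResGens_lapply_lapply i2 i1 i3 i1 n21 n31 (.inl rfl))
  have r1232 := rel (annihilatesResGens_lapply_lapply i1 i2 i3 i2 n12 n32 (.inl rfl))
  have r1323 := rel (annihilatesResGens_lapply_lapply i1 i3 i2 i3 n13 n23 (.inl rfl))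
  have r213 := rel (annihilatesResGens_lapply_add i2 i1 i3 n21 n23 n13)
  have r231 := rel (annihilatesResGens_lapply_add i2 i3 i1 n23 n21 n31)
  have r321 := rel (annihilatesResGens_lapply_add i3 i2 i1 n32 n31 n21)
  have r123 := rel (annihilatesResGens_lapply_add i1 i2 i3 n12 n13 n23)
  have r132 := rel (annihilatesResGens_lapply_add i1 i3 i2 n13 n12 n32)
  have r312 := rel (annihilatesResGens_lapply_add i3 i1 i2 n31 n32 n12)
  simp only [LinearMap.add_apply, Finsupp.lapply_apply, hw21, zero_mul, zero_add, add_zero]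
    at r2131 r1232 r1323 r213 r231 r321 r123 r132 r312
  obtain ⟨h12, h13, h31, h23, h32⟩ := eq_zero_of_wedge_relations hv21 hP hQ
    r2131 r1232 r1323 r213 r231 r321 r123 r132 r312
  ext x
  by_cases hx : ({x.1.1, x.1.2} : Finset (Fin n)) ⊆ {i1, i2, i3}
  · rcases RIdx.eq_of_subset n21 n31 n12 n32 n13 n23 x hx with rfl | rfl | rfl | rfl | rfl | rfl
      <;> assumption
  · exact apply_eq_zero_of_not_subset n21 hv hv21 hw21 hI x hx

end Support

theorem case2_supported_psi_injective_general
    (k : Type) [Field k] (n : ℕ)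
    (i1 i2 i3 : Fin n)
    (n21 : i2 ≠ i1) (n31 : i3 ≠ i1) (n12 : i1 ≠ i2)
    (n32 : i3 ≠ i2) (n13 : i1 ≠ i3) (n23 : i2 ≠ i3)
    (v : RIdx n →₀ k)
    (hsupp : ∀ x : RIdx n,
      ¬ (({x.1.1, x.1.2} : Finset (Fin n)) ⊆ {i1, i2, i3}) → v x = 0)
    (h21 : v ⟨(i2, i1), n21⟩ ≠ 0)
    (hpq : ∃ x : RIdx n, ({x.1.1, x.1.2} : Finset (Fin n)) ⊆ {i1, i2, i3} ∧
      ({x.1.1, x.1.2} : Finset (Fin n)) ≠ {i1, i2} ∧ v x ≠ 0)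
    (hsum : v ⟨(i2, i1), n21⟩ + v ⟨(i3, i1), n31⟩ ≠ 0 ∨
      v ⟨(i1, i2), n12⟩ + v ⟨(i3, i2), n32⟩ ≠ 0 ∨
      v ⟨(i1, i3), n13⟩ + v ⟨(i2, i3), n23⟩ ≠ 0) :
    Function.Injective (resPsi k n (ExteriorAlgebra.ι k v)) := by
  have hP : v ⟨(i1, i3), n13⟩ ≠ 0 ∨ v ⟨(i3, i1), n31⟩ ≠ 0 ∨ v ⟨(i2, i3), n23⟩ ≠ 0 ∨
      v ⟨(i3, i2), n32⟩ ≠ 0 := by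
    obtain ⟨x, hxT, hx12, hx⟩ := hpq
    rcases RIdx.eq_of_subset n21 n31 n12 n32 n13 n23 x hxT with rfl | rfl | h | h | h | h
    · exact absurd rfl hx12
    · exact absurd (Finset.pair_comm _ _) hx12
    all_goals subst h; tauto
  refine (injective_iff_map_eq_zero _).2 fun z hz => Subtype.ext ?_
  obtain ⟨hzI, hz2⟩ := Submodule.mem_inf.1 z.2
  obtain ⟨w, hw21, hzw⟩ := exists_eq_ι_mul_ι_of_ι_mul_eq_zero
    (d := (v ⟨(i2, i1), n21⟩)⁻¹ • Finsupp.lapply ⟨(i2, i1), n21⟩) (by simp [h21]) hz2 hz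
  have hw : w = 0 := eq_zero_of_wedge_mem_resIdeal n21 n31 n12 n32 n13 n23 hsupp h21 hP hsum
    (by simpa [h21] using hw21) (hzw ▸ hzI)
  rw [hzw, hw, map_zero, mul_zero, Submodule.coe_zero]

/-- **Case 2, supported on `{1,2,3}`.** Let `n ≥ 3` and let `i₁, i₂, i₃` be the first three
indices. If `a = Σ a_{p,q} e_{p,q} ∈ E¹` satisfies `a_{r,s} = 0` whenever `{r,s} ⊄ {1,2,3}`,
`a_{2,1} ≠ 0`, `a_{p,q} ≠ 0` for some pair with `{p,q} ⊂ {1,2,3}`, `{p,q} ≠ {1,2}`, and one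
of `a_{2,1}+a_{3,1}`, `a_{1,2}+a_{3,2}`, `a_{1,3}+a_{2,3}` is nonzero, then
`ψ_a : I² → E³` is injective. -/
theorem case2_supported_psi_injective
    (k : Type) [Field k] [IsAlgClosed k] [CharZero k] (n : ℕ) (hn : 3 ≤ n)
    (i1 i2 i3 : Fin n) (e1 : (i1 : ℕ) = 0) (e2 : (i2 : ℕ) = 1) (e3 : (i3 : ℕ) = 2)
    (n21 : i2 ≠ i1) (n31 : i3 ≠ i1) (n12 : i1 ≠ i2)
    (n32 : i3 ≠ i2) (n13 : i1 ≠ i3) (n23 : i2 ≠ i3)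
    (v : RIdx n →₀ k)
    (hsupp : ∀ x : RIdx n,
      ¬ (({x.1.1, x.1.2} : Finset (Fin n)) ⊆ {i1, i2, i3}) → v x = 0)
    (h21 : v ⟨(i2, i1), n21⟩ ≠ 0)
    (hpq : ∃ x : RIdx n, ({x.1.1, x.1.2} : Finset (Fin n)) ⊆ {i1, i2, i3} ∧
      ({x.1.1, x.1.2} : Finset (Fin n)) ≠ {i1, i2} ∧ v x ≠ 0)
    (hsum : v ⟨(i2, i1), n21⟩ + v ⟨(i3, i1), n31⟩ ≠ 0 ∨
      v ⟨(i1, i2), n12⟩ + v ⟨(i3, i2), n32⟩ ≠ 0 ∨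
      v ⟨(i1, i3), n13⟩ + v ⟨(i2, i3), n23⟩ ≠ 0) :
    Function.Injective (resPsi k n (ExteriorAlgebra.ι k v)) :=
  case2_supported_psi_injective_general k n i1 i2 i3 n21 n31 n12 n32 n13 n23 v hsupp h21 hpq hsum
end
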